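/- Let 1 ≤ p < q ≤ ∞ and suppose an algorithm A satisfies E‖A(x) − x‖_∞ ≤ C·ε for all x with ‖x‖_p ≤ 1, where C ≥ 1 and ε ∈ (0,1). Define the denoised algorithm D: for z = A(x), let k = min{⌊ε^{−p}⌋, m}, let I_k be a set of k coordinates of z of largest absolute value, and let D(x) keep z on I_k and be zero elsewhere. Then for all x with ‖x‖_p ≤ 1, E‖D(x) − x‖_q ≤ (1 + 5C)·ε^{1 − p/q}. -/

import Mathlib

open Finset MeasureTheory ENNReal

/-- The `ℓ_q`-norm on `ℝ^m` for an extended exponent `q ∈ (0,∞]`. -/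
noncomputable def lqNorm {m : ℕ} (q : ℝ≥0∞) (x : Fin m → ℝ) : ℝ :=
  if q = ∞ then ⨆ i, |x i| else (∑ i, |x i| ^ q.toReal) ^ (1 / q.toReal)

lemma real_rpow_add_le {a b r : ℝ} (ha : 0 ≤ a) (hb : 0 ≤ b) (hr0 : 0 ≤ r) (hr1 : r ≤ 1) :
    (a + b) ^ r ≤ a ^ r + b ^ r := by
  have h := NNReal.rpow_add_le_add_rpow a.toNNReal b.toNNReal hr0 hr1
  have := (NNReal.coe_le_coe).mpr h
  push_cast [NNReal.coe_rpow] at this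
  rwa [Real.coe_toNNReal a ha, Real.coe_toNNReal b hb] at this

lemma jensen_rpow {Ω : Type*} [MeasurableSpace Ω] (μ : Measure Ω) [IsProbabilityMeasure μ]
    {F : Ω → ℝ≥0∞} (hF : Measurable F) {r : ℝ} (hr0 : 0 ≤ r) (hr1 : r ≤ 1) :
    ∫⁻ ω, F ω ^ r ∂μ ≤ (∫⁻ ω, F ω ∂μ) ^ r := by
  rcases eq_or_lt_of_le hr0 with h0 | hr0'
  · simp [← h0]
  rcases eq_or_lt_of_le hr1 with h1 | hr1'
  · simp [h1]
  have hab : Real.HolderConjugate (1 / r) (1 / (1 - r)) := by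
    constructor
    · rw [one_div, one_div, inv_inv, inv_inv, inv_one]; ring
    · exact one_div_pos.mpr hr0'
    · exact one_div_pos.mpr (by linarith)
  have h := ENNReal.lintegral_mul_le_Lp_mul_Lq μ hab
    ((hF.pow_const r).aemeasurable) (aemeasurable_const (b := (1 : ℝ≥0∞)))
  simp only [Pi.mul_apply, mul_one, ENNReal.one_rpow, lintegral_one,
    measure_univ, ENNReal.one_rpow, mul_one] at h
  calc ∫⁻ ω, F ω ^ r ∂μ ≤ (∫⁻ ω, (F ω ^ r) ^ (1 / r) ∂μ) ^ (1 / (1 / r)) := h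
    _ = (∫⁻ ω, F ω ∂μ) ^ r := by
        rw [one_div_one_div]
        congr 1
        refine lintegral_congr fun ω => ?_
        rw [← ENNReal.rpow_mul, mul_one_div, div_self (ne_of_gt hr0'), ENNReal.rpow_one]

/-- **Denoising.** Let `1 ≤ p < q ≤ ∞` and let the randomized algorithm `A` satisfy
`E‖A(x) - x‖_∞ ≤ C·ε` for all `‖x‖_p ≤ 1`, where `C ≥ 1` and `ε ∈ (0,1)`. With
`k = min{⌊ε^{-p}⌋, m}`, let the denoised algorithm `Dalg` keep, for `z = A(x)`, the
entries of `z` on a set `I_k` of `k` coordinates of largest absolute value and set all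
other coordinates to zero. Then `E‖Dalg(x) - x‖_q ≤ (1 + 5C)·ε^{1 - p/q}` for all
`‖x‖_p ≤ 1` (with the convention `p/∞ = 0`, encoded by `(∞).toReal = 0`). -/
theorem stmt15 {Ω : Type*} [MeasurableSpace Ω] (μ : Measure Ω) [IsProbabilityMeasure μ]
    {m : ℕ} (p : ℝ) (q : ℝ≥0∞) (hp : 1 ≤ p) (hpq : ENNReal.ofReal p < q)
    (C ε : ℝ) (hC : 1 ≤ C) (hε : ε ∈ Set.Ioo (0 : ℝ) 1)
    (A : Ω → (Fin m → ℝ) → (Fin m → ℝ))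
    (hAmeas : ∀ x : Fin m → ℝ, Measurable fun ω => A ω x)
    (hA : ∀ x : Fin m → ℝ, lqNorm (ENNReal.ofReal p) x ≤ 1 →
      ∫⁻ ω, ENNReal.ofReal (lqNorm ∞ (fun i => A ω x i - x i)) ∂μ
        ≤ ENNReal.ofReal (C * ε))
    (k : ℕ) (hk : k = min ⌊ε ^ (-p)⌋₊ m)
    (Dalg : Ω → (Fin m → ℝ) → (Fin m → ℝ))
    (hDmeas : ∀ x : Fin m → ℝ, Measurable fun ω => Dalg ω x)
    (hD : ∀ (ω : Ω) (x : Fin m → ℝ), ∃ I : Finset (Fin m), I.card = k ∧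
      (∀ i ∈ I, ∀ i' ∉ I, |A ω x i'| ≤ |A ω x i|) ∧
      Dalg ω x = fun i => if i ∈ I then A ω x i else 0) :
    ∀ x : Fin m → ℝ, lqNorm (ENNReal.ofReal p) x ≤ 1 →
      ∫⁻ ω, ENNReal.ofReal (lqNorm q (fun i => Dalg ω x i - x i)) ∂μ
        ≤ ENNReal.ofReal ((1 + 5 * C) * ε ^ (1 - p / q.toReal)) := by
  intro x hx
  obtain ⟨hε0, hε1⟩ := hε
  have hp0 : (0:ℝ) < p := lt_of_lt_of_le one_pos hp
  obtain ⟨θ, hθ⟩ : ∃ θ : ℝ, θ = p / q.toReal := ⟨_, rfl⟩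
  rw [← hθ]
  -- basic facts about θ
  have hθ0 : 0 ≤ θ := by rw [hθ]; exact div_nonneg hp0.le ENNReal.toReal_nonneg
  have hθ1 : θ < 1 := by
    by_cases hq : q = ∞
    · rw [hθ, hq]; simp
    · have hqr : p < q.toReal := (ENNReal.ofReal_lt_iff_lt_toReal hp0.le hq).mp hpq
      rw [hθ]
      exact (div_lt_one (lt_trans hp0 hqr)).mpr hqr
  -- the sum bound from hx
  have hsum : ∑ i, |x i| ^ p ≤ 1 := by
    rw [lqNorm, if_neg ENNReal.ofReal_ne_top, ENNReal.toReal_ofReal hp0.le] at hx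
    have h0 : (0:ℝ) ≤ ∑ i, |x i| ^ p :=
      Finset.sum_nonneg fun i _ => Real.rpow_nonneg (abs_nonneg _) p
    have h1 := Real.rpow_le_rpow (Real.rpow_nonneg h0 _) hx hp0.le
    rwa [← Real.rpow_mul h0, one_div_mul_cancel hp0.ne', Real.rpow_one, Real.one_rpow] at h1
  -- E, the sup norm of the error
  set E : Ω → ℝ := fun ω => ⨆ i, |A ω x i - x i| with hEdef
  have hEtop : ∀ ω, lqNorm ∞ (fun i => A ω x i - x i) = E ω := fun ω => by
    rw [lqNorm, if_pos rfl]
  have hE0 : ∀ ω, 0 ≤ E ω := fun ω => Real.iSup_nonneg fun i => abs_nonneg _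
  have hEle : ∀ ω i, |A ω x i - x i| ≤ E ω := fun ω i =>
    le_ciSup (f := fun i => |A ω x i - x i|)
      (Set.Finite.bddAbove (Set.finite_range _)) i
  have hkr : (k:ℝ) ≤ ε ^ (-p) := by
    rw [hk]
    calc ((min ⌊ε ^ (-p)⌋₊ m : ℕ):ℝ) ≤ (⌊ε ^ (-p)⌋₊ : ℝ) := by
          exact_mod_cast min_le_left _ _
      _ ≤ ε ^ (-p) := Nat.floor_le (Real.rpow_nonneg hε0.le _)
  -- the key pointwise bound
  have key : ∀ ω, lqNorm q (fun i => Dalg ω x i - x i) ≤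
      ε ^ (1 - 2*θ) * E ω ^ θ + 2 ^ (1-θ) * ε ^ (-θ) * E ω
        + ε ^ (1-θ) + 2 ^ (1-θ) * E ω ^ (1-θ) := by
    intro ω
    obtain ⟨I, hIcard, hIsel, hDeq⟩ := hD ω x
    have hN0 : (0:ℝ) ≤ ε + 2 * E ω := by linarith [hE0 ω]
    -- sup bound
    have hsup : ∀ i, |Dalg ω x i - x i| ≤ ε + 2 * E ω := by
      intro i
      rw [hDeq]
      by_cases hi : i ∈ I
      · simp only [if_pos hi]
        have := hEle ω i
        linarith [hE0 ω]
      · simp only [if_neg hi, zero_sub, abs_neg]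
        have hkfloor : k = ⌊ε ^ (-p)⌋₊ := by
          rcases min_cases ⌊ε ^ (-p)⌋₊ m with ⟨h1, h2⟩ | ⟨h1, h2⟩
          · rw [hk, h1]
          · exfalso
            have hIuniv : I = Finset.univ := Finset.eq_univ_of_card I (by
              rw [hIcard, hk, h1, Fintype.card_fin])
            exact hi (hIuniv ▸ Finset.mem_univ i)
        set S := Finset.univ.filter (fun j => ε < |x j|) with hS
        have hScard : S.card ≤ k := by
          have hterm : ∀ j ∈ S, ε ^ p ≤ |x j| ^ p := fun j hj =>
            Real.rpow_le_rpow hε0.le (le_of_lt (Finset.mem_filter.mp hj).2) hp0.le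
          have h1 : (S.card : ℝ) * ε ^ p ≤ ∑ j ∈ S, |x j| ^ p := by
            calc (S.card : ℝ) * ε ^ p = ∑ _j ∈ S, ε ^ p := by
                  rw [Finset.sum_const, nsmul_eq_mul]
              _ ≤ ∑ j ∈ S, |x j| ^ p := Finset.sum_le_sum hterm
          have h2 : ∑ j ∈ S, |x j| ^ p ≤ 1 :=
            le_trans (Finset.sum_le_sum_of_subset_of_nonneg (Finset.subset_univ S)
              fun j _ _ => Real.rpow_nonneg (abs_nonneg _) p) hsum
          have hεp : (0:ℝ) < ε ^ p := Real.rpow_pos_of_pos hε0 p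
          have h3 : (S.card : ℝ) ≤ ε ^ (-p) := by
            rw [Real.rpow_neg hε0.le, ← one_div, le_div_iff₀ hεp]
            linarith
          rw [hkfloor]
          exact Nat.le_floor h3
        have hcard' : S.card < (insert i I).card := by
          rw [Finset.card_insert_of_notMem hi, hIcard]; omega
        obtain ⟨j, hjmem, hjS⟩ : ∃ j ∈ insert i I, j ∉ S := by
          by_contra hcon
          push_neg at hcon
          exact absurd (Finset.card_le_card hcon) (not_le.mpr hcard')
        have hxj : |x j| ≤ ε := by
          by_contra hc
          push_neg at hc
          exact hjS (Finset.mem_filter.mpr ⟨Finset.mem_univ j, hc⟩)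
        rcases Finset.mem_insert.mp hjmem with rfl | hjI
        · linarith [hE0 ω]
        · have h1 : |x i| ≤ |A ω x i| + E ω := by
            have h := hEle ω i
            calc |x i| = |A ω x i - (A ω x i - x i)| := by congr 1; ring
              _ ≤ |A ω x i| + |A ω x i - x i| := abs_sub _ _
              _ ≤ |A ω x i| + E ω := by linarith
          have h2 : |A ω x i| ≤ |A ω x j| := hIsel j hjI i hi
          have h3 : |A ω x j| ≤ |x j| + E ω := by
            have h := hEle ω j
            calc |A ω x j| = |x j + (A ω x j - x j)| := by congr 1; ring
              _ ≤ |x j| + |A ω x j - x j| := abs_add_le _ _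
              _ ≤ |x j| + E ω := by linarith
          linarith
    by_cases hq : q = ∞
    · -- q = ∞ : θ = 0
      have hθ0' : θ = 0 := by rw [hθ, hq]; simp
      rw [lqNorm, if_pos hq, hθ0']
      have hsles : (⨆ i, |Dalg ω x i - x i|) ≤ ε + 2 * E ω := Real.iSup_le hsup hN0
      have hE := hE0 ω
      calc (⨆ i, |Dalg ω x i - x i|) ≤ ε + 2 * E ω := hsles
        _ ≤ ε ^ (1 - 2*(0:ℝ)) * E ω ^ (0:ℝ) + 2 ^ (1-(0:ℝ)) * ε ^ (-(0:ℝ)) * E ω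
            + ε ^ (1-(0:ℝ)) + 2 ^ (1-(0:ℝ)) * E ω ^ (1-(0:ℝ)) := by
          norm_num [Real.rpow_one]
          linarith
    · -- q finite
      have hqr : p < q.toReal := (ENNReal.ofReal_lt_iff_lt_toReal hp0.le hq).mp hpq
      have hqr0 : (0:ℝ) < q.toReal := lt_trans hp0 hqr
      have hqr1 : (1:ℝ) ≤ q.toReal := le_trans hp hqr.le
      have habs : ∀ i, (0:ℝ) ≤ |Dalg ω x i - x i| := fun i => abs_nonneg _
      have hsum_p_nonneg : (0:ℝ) ≤ ∑ i, |Dalg ω x i - x i| ^ p :=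
        Finset.sum_nonneg fun i _ => Real.rpow_nonneg (habs i) p
      -- ℓp bound
      have hSp : ∑ i, |Dalg ω x i - x i| ^ p ≤ (k:ℝ) * E ω ^ p + 1 := by
        calc ∑ i, |Dalg ω x i - x i| ^ p
            ≤ ∑ i, (if i ∈ I then E ω ^ p else |x i| ^ p) := by
              apply Finset.sum_le_sum
              intro i _
              rw [hDeq]
              by_cases hi : i ∈ I
              · simp only [if_pos hi]
                exact Real.rpow_le_rpow (abs_nonneg _) (hEle ω i) hp0.le
              · simp only [if_neg hi, zero_sub, abs_neg, le_refl]
          _ = (I.card : ℝ) * E ω ^ p + ∑ i ∈ Finset.univ.filter (fun i => i ∉ I), |x i| ^ p := by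
              rw [Finset.sum_ite, Finset.sum_const, nsmul_eq_mul, Finset.filter_mem_eq_inter,
                Finset.univ_inter]
          _ ≤ (k:ℝ) * E ω ^ p + 1 := by
              have hle : ∑ i ∈ Finset.univ.filter (fun i => i ∉ I), |x i| ^ p ≤ 1 :=
                le_trans (Finset.sum_le_sum_of_subset_of_nonneg (Finset.filter_subset _ _)
                  fun j _ _ => Real.rpow_nonneg (abs_nonneg _) p) hsum
              have hc : (I.card : ℝ) = (k:ℝ) := by exact_mod_cast hIcard
              rw [hc]
              linarith
      -- interpolation
      have hstep : ∑ i, |Dalg ω x i - x i| ^ q.toReal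
          ≤ (∑ i, |Dalg ω x i - x i| ^ p) * (ε + 2 * E ω) ^ (q.toReal - p) := by
        rw [Finset.sum_mul]
        apply Finset.sum_le_sum
        intro i _
        have h1 : |Dalg ω x i - x i| ^ q.toReal
            = |Dalg ω x i - x i| ^ p * |Dalg ω x i - x i| ^ (q.toReal - p) := by
          rw [← Real.rpow_add' (habs i) (by simpa using hqr0.ne')]
          congr 1
          ring
        rw [h1]
        apply mul_le_mul_of_nonneg_left _ (Real.rpow_nonneg (habs i) p)
        exact Real.rpow_le_rpow (habs i) (hsup i) (by linarith)
      have hdiv0 : (0:ℝ) ≤ E ω / ε := div_nonneg (hE0 ω) hε0.le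
      have hfin : lqNorm q (fun i => Dalg ω x i - x i)
          ≤ ((E ω / ε) ^ θ + 1) * (ε + 2 * E ω) ^ (1 - θ) := by
        rw [lqNorm, if_neg hq]
        have hsum_q_nonneg : (0:ℝ) ≤ ∑ i, |Dalg ω x i - x i| ^ q.toReal :=
          Finset.sum_nonneg fun i _ => Real.rpow_nonneg (habs i) _
        calc (∑ i, |Dalg ω x i - x i| ^ q.toReal) ^ (1 / q.toReal)
            ≤ ((∑ i, |Dalg ω x i - x i| ^ p) * (ε + 2 * E ω) ^ (q.toReal - p)) ^ (1 / q.toReal) :=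
              Real.rpow_le_rpow hsum_q_nonneg hstep (by positivity)
          _ = (∑ i, |Dalg ω x i - x i| ^ p) ^ (1 / q.toReal)
              * ((ε + 2 * E ω) ^ (q.toReal - p)) ^ (1 / q.toReal) :=
              Real.mul_rpow hsum_p_nonneg (Real.rpow_nonneg hN0 _)
          _ ≤ ((E ω / ε) ^ p + 1) ^ (1 / q.toReal) * (ε + 2 * E ω) ^ (1 - θ) := by
              have e1 : ((ε + 2 * E ω) ^ (q.toReal - p)) ^ (1 / q.toReal)
                  = (ε + 2 * E ω) ^ (1 - θ) := by
                rw [← Real.rpow_mul hN0]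
                congr 1
                rw [hθ]
                field_simp
              rw [e1]
              apply mul_le_mul_of_nonneg_right _ (Real.rpow_nonneg hN0 _)
              apply Real.rpow_le_rpow hsum_p_nonneg _ (by positivity)
              have hkEp : (k:ℝ) * E ω ^ p ≤ (E ω / ε) ^ p := by
                calc (k:ℝ) * E ω ^ p ≤ ε ^ (-p) * E ω ^ p :=
                      mul_le_mul_of_nonneg_right hkr (Real.rpow_nonneg (hE0 ω) p)
                  _ = (E ω / ε) ^ p := by
                      rw [Real.rpow_neg hε0.le, Real.div_rpow (hE0 ω) hε0.le]
                      ring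
              linarith [hSp]
          _ ≤ ((E ω / ε) ^ θ + 1) * (ε + 2 * E ω) ^ (1 - θ) := by
              apply mul_le_mul_of_nonneg_right _ (Real.rpow_nonneg hN0 _)
              have h4 := real_rpow_add_le (Real.rpow_nonneg hdiv0 p) zero_le_one
                (by positivity) ((div_le_one hqr0).mpr hqr1)
              rw [Real.one_rpow, ← Real.rpow_mul hdiv0, mul_one_div, ← hθ] at h4
              exact h4
      -- expand
      have hNsub : (ε + 2 * E ω) ^ (1 - θ) ≤ ε ^ (1 - θ) + (2 * E ω) ^ (1 - θ) :=
        real_rpow_add_le hε0.le (by linarith [hE0 ω]) (by linarith) (by linarith)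
      have e1 : (E ω / ε) ^ θ = E ω ^ θ * ε ^ (-θ) := by
        rw [Real.div_rpow (hE0 ω) hε0.le, Real.rpow_neg hε0.le, div_eq_mul_inv]
      have e2 : (2 * E ω) ^ (1 - θ) = 2 ^ (1 - θ) * E ω ^ (1 - θ) :=
        Real.mul_rpow (by norm_num) (hE0 ω)
      have e3 : E ω ^ θ * E ω ^ (1 - θ) = E ω := by
        rw [← Real.rpow_add' (hE0 ω) (by norm_num)]
        norm_num
      have e4 : ε ^ (-θ) * ε ^ (1 - θ) = ε ^ (1 - 2*θ) := by
        rw [← Real.rpow_add hε0]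
        congr 1
        ring
      calc lqNorm q (fun i => Dalg ω x i - x i)
          ≤ ((E ω / ε) ^ θ + 1) * (ε + 2 * E ω) ^ (1 - θ) := hfin
        _ ≤ ((E ω / ε) ^ θ + 1) * (ε ^ (1 - θ) + (2 * E ω) ^ (1 - θ)) := by
            apply mul_le_mul_of_nonneg_left hNsub
            have := Real.rpow_nonneg hdiv0 θ
            linarith
        _ = ε ^ (1 - 2*θ) * E ω ^ θ + 2 ^ (1-θ) * ε ^ (-θ) * E ω
            + ε ^ (1-θ) + 2 ^ (1-θ) * E ω ^ (1-θ) := by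
            rw [e1, e2]
            linear_combination (E ω ^ θ) * e4 + ((2:ℝ) ^ (1-θ) * ε ^ (-θ)) * e3
  -- measurability
  have hEmeas : Measurable E := by
    apply Measurable.iSup
    intro i
    exact (((measurable_pi_apply i).comp (hAmeas x)).sub measurable_const).abs
  set F : Ω → ℝ≥0∞ := fun ω => ENNReal.ofReal (E ω) with hFdef
  have hFmeas : Measurable F := hEmeas.ennreal_ofReal
  have hFint : ∫⁻ ω, F ω ∂μ ≤ ENNReal.ofReal (C * ε) := by
    have h := hA x hx
    simpa only [hEtop] using h
  have hCε0 : (0:ℝ) ≤ C * ε := mul_nonneg (by linarith) hε0.le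
  -- nonnegativity of coefficients
  have hc1 : (0:ℝ) ≤ ε ^ (1 - 2*θ) := Real.rpow_nonneg hε0.le _
  have hc2 : (0:ℝ) ≤ 2 ^ (1-θ) * ε ^ (-θ) :=
    mul_nonneg (Real.rpow_nonneg (by norm_num) _) (Real.rpow_nonneg hε0.le _)
  have hc4 : (0:ℝ) ≤ (2:ℝ) ^ (1-θ) := Real.rpow_nonneg (by norm_num) _
  have hεθ : (0:ℝ) ≤ ε ^ (1-θ) := Real.rpow_nonneg hε0.le _
  -- helper real inequalities
  have h2le : (2:ℝ) ^ (1-θ) ≤ 2 := by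
    calc (2:ℝ) ^ (1-θ) ≤ (2:ℝ) ^ (1:ℝ) :=
        Real.rpow_le_rpow_of_exponent_le one_le_two (by linarith)
      _ = 2 := Real.rpow_one 2
  have hCle : ∀ r : ℝ, 0 ≤ r → r ≤ 1 → C ^ r ≤ C := by
    intro r _ hr1
    calc C ^ r ≤ C ^ (1:ℝ) := Real.rpow_le_rpow_of_exponent_le hC hr1
      _ = C := Real.rpow_one C
  calc ∫⁻ ω, ENNReal.ofReal (lqNorm q (fun i => Dalg ω x i - x i)) ∂μ
      ≤ ∫⁻ ω, (ENNReal.ofReal (ε ^ (1 - 2*θ)) * F ω ^ θ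
          + ENNReal.ofReal (2 ^ (1-θ) * ε ^ (-θ)) * F ω
          + ENNReal.ofReal (ε ^ (1-θ))
          + ENNReal.ofReal ((2:ℝ) ^ (1-θ)) * F ω ^ (1-θ)) ∂μ := by
        apply lintegral_mono
        intro ω
        refine le_trans (ENNReal.ofReal_le_ofReal (key ω)) ?_
        have hEω := hE0 ω
        have g1 : ENNReal.ofReal (ε ^ (1 - 2*θ) * E ω ^ θ)
            = ENNReal.ofReal (ε ^ (1 - 2*θ)) * F ω ^ θ := by
          rw [ENNReal.ofReal_mul hc1, ENNReal.ofReal_rpow_of_nonneg hEω hθ0]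
        have g2 : ENNReal.ofReal (2 ^ (1-θ) * ε ^ (-θ) * E ω)
            = ENNReal.ofReal (2 ^ (1-θ) * ε ^ (-θ)) * F ω := by
          rw [ENNReal.ofReal_mul hc2]
        have g4 : ENNReal.ofReal ((2:ℝ) ^ (1-θ) * E ω ^ (1-θ))
            = ENNReal.ofReal ((2:ℝ) ^ (1-θ)) * F ω ^ (1-θ) := by
          rw [ENNReal.ofReal_mul hc4, ENNReal.ofReal_rpow_of_nonneg hEω (by linarith)]
        rw [ENNReal.ofReal_add (by positivity) (mul_nonneg hc4 (Real.rpow_nonneg hEω _)),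
          ENNReal.ofReal_add (by positivity) hεθ,
          ENNReal.ofReal_add (mul_nonneg hc1 (Real.rpow_nonneg hEω _))
            (mul_nonneg hc2 hEω), g1, g2, g4]
    _ ≤ ENNReal.ofReal (C * ε ^ (1-θ)) + ENNReal.ofReal (2 * C * ε ^ (1-θ))
        + ENNReal.ofReal (ε ^ (1-θ)) + ENNReal.ofReal (2 * C * ε ^ (1-θ)) := by
        have m1 : Measurable fun ω => ENNReal.ofReal (ε ^ (1 - 2*θ)) * F ω ^ θ :=
          (hFmeas.pow_const θ).const_mul _
        have m2 : Measurable fun ω => ENNReal.ofReal (2 ^ (1-θ) * ε ^ (-θ)) * F ω :=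
          hFmeas.const_mul _
        have m3 : Measurable fun _ : Ω => ENNReal.ofReal (ε ^ (1-θ)) := measurable_const
        have m4 : Measurable fun ω => ENNReal.ofReal ((2:ℝ) ^ (1-θ)) * F ω ^ (1-θ) :=
          (hFmeas.pow_const (1-θ)).const_mul _
        rw [lintegral_add_right _ m4, lintegral_add_right _ m3, lintegral_add_right _ m2]
        have i1 : ∫⁻ ω, ENNReal.ofReal (ε ^ (1 - 2*θ)) * F ω ^ θ ∂μ
            ≤ ENNReal.ofReal (C * ε ^ (1-θ)) := by
          rw [lintegral_const_mul _ (hFmeas.pow_const θ)]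
          calc ENNReal.ofReal (ε ^ (1 - 2*θ)) * ∫⁻ ω, F ω ^ θ ∂μ
              ≤ ENNReal.ofReal (ε ^ (1 - 2*θ)) * ENNReal.ofReal (C * ε) ^ θ := by
                apply mul_le_mul_right
                exact le_trans (jensen_rpow μ hFmeas hθ0 hθ1.le)
                  (ENNReal.rpow_le_rpow hFint hθ0)
            _ = ENNReal.ofReal (ε ^ (1 - 2*θ) * (C * ε) ^ θ) := by
                rw [ENNReal.ofReal_rpow_of_nonneg hCε0 hθ0,
                  ← ENNReal.ofReal_mul hc1]
            _ ≤ ENNReal.ofReal (C * ε ^ (1-θ)) := by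
                apply ENNReal.ofReal_le_ofReal
                have hee : ε ^ (1 - 2*θ) * ε ^ θ = ε ^ (1-θ) := by
                  rw [← Real.rpow_add hε0]; congr 1; ring
                calc ε ^ (1 - 2*θ) * (C * ε) ^ θ
                    = (ε ^ (1 - 2*θ) * ε ^ θ) * C ^ θ := by
                      rw [Real.mul_rpow (by linarith) hε0.le]; ring
                  _ = ε ^ (1-θ) * C ^ θ := by rw [hee]
                  _ ≤ ε ^ (1-θ) * C := mul_le_mul_of_nonneg_left
                      (hCle θ hθ0 hθ1.le) hεθ
                  _ = C * ε ^ (1-θ) := mul_comm _ _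
        have i2 : ∫⁻ ω, ENNReal.ofReal (2 ^ (1-θ) * ε ^ (-θ)) * F ω ∂μ
            ≤ ENNReal.ofReal (2 * C * ε ^ (1-θ)) := by
          rw [lintegral_const_mul _ hFmeas]
          calc ENNReal.ofReal (2 ^ (1-θ) * ε ^ (-θ)) * ∫⁻ ω, F ω ∂μ
              ≤ ENNReal.ofReal (2 ^ (1-θ) * ε ^ (-θ)) * ENNReal.ofReal (C * ε) :=
                mul_le_mul_right hFint _
            _ = ENNReal.ofReal (2 ^ (1-θ) * ε ^ (-θ) * (C * ε)) := by
                rw [← ENNReal.ofReal_mul hc2]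
            _ ≤ ENNReal.ofReal (2 * C * ε ^ (1-θ)) := by
                apply ENNReal.ofReal_le_ofReal
                have h2b : ε ^ (1-θ) = ε ^ (-θ) * ε := by
                  rw [show (1-θ) = -θ + 1 from by ring, Real.rpow_add hε0, Real.rpow_one]
                calc 2 ^ (1-θ) * ε ^ (-θ) * (C * ε)
                    = 2 ^ (1-θ) * C * (ε ^ (-θ) * ε) := by ring
                  _ = 2 ^ (1-θ) * C * ε ^ (1-θ) := by rw [← h2b]
                  _ ≤ 2 * C * ε ^ (1-θ) := by
                      apply mul_le_mul_of_nonneg_right _ hεθ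
                      apply mul_le_mul_of_nonneg_right h2le (by linarith)
        have i3 : ∫⁻ _, ENNReal.ofReal (ε ^ (1-θ)) ∂μ = ENNReal.ofReal (ε ^ (1-θ)) := by
          rw [lintegral_const, measure_univ, mul_one]
        have i4 : ∫⁻ ω, ENNReal.ofReal ((2:ℝ) ^ (1-θ)) * F ω ^ (1-θ) ∂μ
            ≤ ENNReal.ofReal (2 * C * ε ^ (1-θ)) := by
          rw [lintegral_const_mul _ (hFmeas.pow_const (1-θ))]
          calc ENNReal.ofReal ((2:ℝ) ^ (1-θ)) * ∫⁻ ω, F ω ^ (1-θ) ∂μ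
              ≤ ENNReal.ofReal ((2:ℝ) ^ (1-θ)) * ENNReal.ofReal (C * ε) ^ (1-θ) := by
                apply mul_le_mul_right
                exact le_trans (jensen_rpow μ hFmeas (by linarith) (by linarith))
                  (ENNReal.rpow_le_rpow hFint (by linarith))
            _ = ENNReal.ofReal ((2:ℝ) ^ (1-θ) * (C * ε) ^ (1-θ)) := by
                rw [ENNReal.ofReal_rpow_of_nonneg hCε0 (by linarith),
                  ← ENNReal.ofReal_mul hc4]
            _ ≤ ENNReal.ofReal (2 * C * ε ^ (1-θ)) := by
                apply ENNReal.ofReal_le_ofReal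
                calc (2:ℝ) ^ (1-θ) * (C * ε) ^ (1-θ)
                    = (2:ℝ) ^ (1-θ) * (C ^ (1-θ) * ε ^ (1-θ)) := by
                      rw [Real.mul_rpow (by linarith) hε0.le]
                  _ ≤ 2 * (C * ε ^ (1-θ)) := by
                      apply mul_le_mul h2le _ (mul_nonneg
                        (Real.rpow_nonneg (by linarith) _) hεθ) (by norm_num)
                      exact mul_le_mul_of_nonneg_right
                        (hCle (1-θ) (by linarith) (by linarith)) hεθ
                  _ = 2 * C * ε ^ (1-θ) := by ring
        exact add_le_add (add_le_add (add_le_add i1 i2) i3.le) i4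
    _ ≤ ENNReal.ofReal ((1 + 5 * C) * ε ^ (1-θ)) := by
        rw [← ENNReal.ofReal_add (by positivity) (by positivity),
          ← ENNReal.ofReal_add (by positivity) hεθ,
          ← ENNReal.ofReal_add (by positivity) (by positivity)]
        apply ENNReal.ofReal_le_ofReal
        have : C * ε ^ (1-θ) + 2 * C * ε ^ (1-θ) + ε ^ (1-θ) + 2 * C * ε ^ (1-θ)
            = (1 + 5 * C) * ε ^ (1-θ) := by ring
        linarith
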